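/- arXiv:0712.0985 — 3 statements merged into one kernel-verified Lean document; each statement's English description precedes it below -/
import Mathlib

section
/- Let k ≥ 2 be a prime number. In the polynomial ring (ZMod k)[X], one has ∑_{i=1}^{k−1} i·X^{i−1} = −(X − 1)^{k−2}. -/
/-! Over a ring of prime characteristic `p`, multiplying `∑_{i<p} X^i` by `X - 1` gives
`X^p - 1 = (X - 1)^p`, and `X - 1` is a nonzerodivisor, so `∑_{i<p} X^i = (X - 1)^(p-1)`.
Differentiating both sides gives the claim, since `p - 1 = -1` in characteristic `p`. -/

open Polynomial

namespace Polynomial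

theorem sum_Icc_natCast_mul_X_pow_pred_eq_derivative_geom_sum {R : Type*} [Semiring R] (n : ℕ) :
    ∑ i ∈ Finset.Icc 1 (n - 1), (i : R[X]) * X ^ (i - 1) =
      derivative (∑ i ∈ Finset.range n, (X : R[X]) ^ i) := by
  rw [derivative_sum]
  simp only [derivative_X_pow, ← C_eq_natCast]
  refine Finset.sum_subset (fun i hi => ?_) (fun i hi hi' => ?_)
  · simp only [Finset.mem_Icc, Finset.mem_range] at hi ⊢
    omega
  · have hi0 : i = 0 := by
      simp only [Finset.mem_Icc, Finset.mem_range] at hi hi'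
      omega
    simp [hi0]

variable {R : Type*} [CommRing R] (p : ℕ) [Fact p.Prime] [CharP R p]

theorem geom_sum_X_eq_X_sub_one_pow_of_charP :
    ∑ i ∈ Finset.range p, (X : R[X]) ^ i = (X - 1) ^ (p - 1) := by
  have hp : 1 ≤ p := (Fact.out : p.Prime).one_le
  refine (monic_X_sub_C (1 : R)).isRegular.left ?_
  change (X - C 1) * _ = (X - C 1) * _
  rw [C_1, mul_geom_sum, ← pow_succ', Nat.sub_add_cancel hp, sub_pow_char, one_pow]

theorem derivative_X_sub_one_pow_pred_of_charP :
    derivative ((X - 1 : R[X]) ^ (p - 1)) = -(X - 1) ^ (p - 2) := by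
  have hp : 1 ≤ p := (Fact.out : p.Prime).one_le
  have hcast : ((p - 1 : ℕ) : R) = -1 := by
    rw [Nat.cast_sub hp, CharP.cast_eq_zero, Nat.cast_one, zero_sub]
  rw [← C_1, derivative_X_sub_C_pow, hcast, C_neg, C_1, Nat.sub_sub, neg_one_mul]

end Polynomial

theorem stmt_4_general (k : ℕ) (hk : Nat.Prime k) :
    (∑ i ∈ Finset.Icc 1 (k - 1), (i : (ZMod k)[X]) * X ^ (i - 1)) =
      -(X - 1) ^ (k - 2) := by
  have : Fact k.Prime := ⟨hk⟩
  rw [sum_Icc_natCast_mul_X_pow_pred_eq_derivative_geom_sum,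
    geom_sum_X_eq_X_sub_one_pow_of_charP, derivative_X_sub_one_pow_pred_of_charP]

open Polynomial in
theorem stmt_4 (k : ℕ) (hk : Nat.Prime k) (hk2 : 2 ≤ k) :
    (∑ i ∈ Finset.Icc 1 (k - 1), (i : (ZMod k)[X]) * X ^ (i - 1)) =
      -(X - 1) ^ (k - 2) :=
  stmt_4_general k hk
end

section
/- Let R = ℤ[t]/(t⁴ − t³ + t² − t + 1) with τ the image of t. If k₁, k₂ ∈ ℕ, i ∈ ℕ, and ε ∈ {1, −1} satisfy (1 + τ)^{k₁}·(1 − τ)^{k₂} = ε·τⁱ in R, then k₁ = 0 and k₂ = 0. -/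
/-!
Map `R` to `ℂ` by sending `τ` to `ζ = exp (3πi/5)`, a root of `t⁴ - t³ + t² - t + 1`. Taking
absolute values, `‖1 + ζ‖ ^ k₁ * ‖1 - ζ‖ ^ k₂ = 1`, since `ζ` and `±1` have absolute value `1`.
As `cos (3π/5) ∈ (-1/2, 0)`, both `‖1 ± ζ‖ ^ 2 = 2 ± 2 cos (3π/5)` exceed `1`, so both exponents
vanish.
-/

open Complex Polynomial
open scoped Real

theorem eq_zero_and_eq_zero_of_pow_mul_pow_eq_one {a b : ℝ} (ha : 1 < a) (hb : 1 < b) {m n : ℕ}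
    (h : a ^ m * b ^ n = 1) : m = 0 ∧ n = 0 := by
  have ham : 1 ≤ a ^ m := one_le_pow₀ ha.le
  have hbn : 1 ≤ b ^ n := one_le_pow₀ hb.le
  constructor
  · by_contra hm
    nlinarith [one_lt_pow₀ ha hm]
  · by_contra hn
    nlinarith [one_lt_pow₀ hb hn]

theorem exponents_eq_zero_of_one_add_pow_mul_one_sub_pow_eq {A K : Type*} [Ring A]
    [NormedDivisionRing K] (φ : A →+* K) {τ ε : A} (hτ : ‖φ τ‖ = 1) (hε : ‖φ ε‖ = 1)
    (h_add : 1 < ‖1 + φ τ‖) (h_sub : 1 < ‖1 - φ τ‖) {k₁ k₂ i : ℕ}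
    (h : (1 + τ) ^ k₁ * (1 - τ) ^ k₂ = ε * τ ^ i) : k₁ = 0 ∧ k₂ = 0 := by
  refine eq_zero_and_eq_zero_of_pow_mul_pow_eq_one h_add h_sub ?_
  simpa [hτ, hε] using congrArg (‖φ ·‖) h

theorem norm_one_add_sq_of_norm_eq_one {z : ℂ} (hz : ‖z‖ = 1) : ‖1 + z‖ ^ 2 = 2 + 2 * z.re := by
  rw [Complex.sq_norm, normSq_add, ← Complex.sq_norm z, hz]
  norm_num

theorem norm_one_sub_sq_of_norm_eq_one {z : ℂ} (hz : ‖z‖ = 1) : ‖1 - z‖ ^ 2 = 2 - 2 * z.re := by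
  have := norm_one_add_sq_of_norm_eq_one (z := -z) (by rwa [norm_neg])
  rwa [neg_re, ← sub_eq_add_neg, mul_neg, ← sub_eq_add_neg] at this

theorem neg_one_half_lt_cos_three_pi_div_five : -(1 / 2) < Real.cos (3 * π / 5) := by
  have : Real.cos (π - π / 3) < Real.cos (3 * π / 5) :=
    Real.cos_lt_cos_of_nonneg_of_le_pi (by positivity) (by linarith [Real.pi_pos])
      (by linarith [Real.pi_pos])
  rwa [Real.cos_pi_sub, Real.cos_pi_div_three] at this

theorem cos_three_pi_div_five_neg : Real.cos (3 * π / 5) < 0 :=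
  Real.cos_neg_of_pi_div_two_lt_of_lt (by linarith [Real.pi_pos]) (by linarith [Real.pi_pos])

/-- The root `exp (πi/5)` of `X⁴ - X³ + X² - X + 1` would not do: there `‖1 - ζ‖ < 1`. -/
noncomputable def ζ₁₀ : ℂ := exp (↑(3 * π / 5) * I)

theorem norm_ζ₁₀ : ‖ζ₁₀‖ = 1 := norm_exp_ofReal_mul_I _

theorem ζ₁₀_re : ζ₁₀.re = Real.cos (3 * π / 5) := exp_ofReal_mul_I_re _

theorem one_lt_norm_one_add_ζ₁₀ : 1 < ‖1 + ζ₁₀‖ := by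
  have := norm_one_add_sq_of_norm_eq_one norm_ζ₁₀
  nlinarith [norm_nonneg (1 + ζ₁₀), ζ₁₀_re, neg_one_half_lt_cos_three_pi_div_five]

theorem one_lt_norm_one_sub_ζ₁₀ : 1 < ‖1 - ζ₁₀‖ := by
  have := norm_one_sub_sq_of_norm_eq_one norm_ζ₁₀
  nlinarith [norm_nonneg (1 - ζ₁₀), ζ₁₀_re, cos_three_pi_div_five_neg]

theorem ζ₁₀_pow_five : ζ₁₀ ^ 5 = -1 := by
  rw [ζ₁₀, ← Complex.exp_nat_mul,
    show ((5 : ℕ) : ℂ) * (↑(3 * π / 5) * I) = ((3 : ℕ) : ℂ) * (π * I) by push_cast; ring,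
    Complex.exp_nat_mul, exp_pi_mul_I]
  norm_num

theorem ζ₁₀_ne_neg_one : ζ₁₀ ≠ -1 := by
  intro h
  have h_im := congrArg im h
  rw [ζ₁₀, exp_ofReal_mul_I_im, neg_im, one_im, neg_zero] at h_im
  exact (Real.sin_pos_of_pos_of_lt_pi (by positivity) (by linarith [Real.pi_pos])).ne' h_im

theorem aeval_ζ₁₀_eq_zero : aeval ζ₁₀ (X ^ 4 - X ^ 3 + X ^ 2 - X + 1 : ℤ[X]) = 0 := by
  have key : (ζ₁₀ + 1) * (ζ₁₀ ^ 4 - ζ₁₀ ^ 3 + ζ₁₀ ^ 2 - ζ₁₀ + 1) = 0 := by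
    linear_combination ζ₁₀_pow_five
  simpa [sub_eq_zero, ζ₁₀_ne_neg_one, add_eq_zero_iff_eq_neg] using key

theorem stmt_9 (I : Ideal (Polynomial ℤ))
    (hI : I = Ideal.span ({X ^ 4 - X ^ 3 + X ^ 2 - X + 1} : Set (Polynomial ℤ)))
    (τ : Polynomial ℤ ⧸ I) (hτ : τ = Ideal.Quotient.mk I X)
    (k₁ k₂ i : ℕ) (ε : Polynomial ℤ ⧸ I) (hε : ε = 1 ∨ ε = -1)
    (h : (1 + τ) ^ k₁ * (1 - τ) ^ k₂ = ε * τ ^ i) :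
    k₁ = 0 ∧ k₂ = 0 := by
  let φ := Ideal.Quotient.lift I (aeval ζ₁₀).toRingHom fun a ha => by
    rw [hI, Ideal.mem_span_singleton'] at ha
    obtain ⟨c, rfl⟩ := ha
    simp [aeval_ζ₁₀_eq_zero]
  have hφτ : φ τ = ζ₁₀ := by simp [φ, hτ]
  refine exponents_eq_zero_of_one_add_pow_mul_one_sub_pow_eq φ ?_ ?_ ?_ ?_ h
  · rw [hφτ, norm_ζ₁₀]
  · rcases hε with rfl | rfl <;> simp
  · rw [hφτ]; exact one_lt_norm_one_add_ζ₁₀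
  · rw [hφτ]; exact one_lt_norm_one_sub_ζ₁₀
end

section
/- Let R be a commutative ring, d ∈ R, and define (a₁, a₂) ∗ (b₁, b₂) := (a₁b₁, a₁b₂ + a₂b₁ + a₂b₂d) on R × R. Define N(a₁, a₂) := a₁d + a₂ and D(a₁, a₂) := a₁ + a₂d. Then for all pairs a = (a₁, a₂) and b = (b₁, b₂): D(a ∗ b) = D(a)·D(b) and N(a ∗ b) = a₁·N(b) + a₂·D(b). -/
theorem stmt_16 {R : Type*} [CommRing R] (d : R)
    (mul : R × R → R × R → R × R)
    (hmul : ∀ a b : R × R,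
      mul a b = (a.1 * b.1, a.1 * b.2 + a.2 * b.1 + a.2 * b.2 * d))
    (N D : R × R → R)
    (hN : ∀ a : R × R, N a = a.1 * d + a.2)
    (hD : ∀ a : R × R, D a = a.1 + a.2 * d) :
    ∀ a b : R × R,
      D (mul a b) = D a * D b ∧ N (mul a b) = a.1 * N b + a.2 * D b := by
  intro a b
  simp only [hmul, hN, hD]
  constructor <;> ring
end
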